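/- arXiv:2407.21688 — 2 statements merged into one kernel-verified Lean document; each statement's English description precedes it below -/
import Mathlib

section
/- Let G be a finite group with representations V_A on M_A and V_B on M_B (real finite-dimensional vector spaces). Define collective representation V_{AB}(g) := V_A(g) ⊗ V_B(g) on M_A ⊗ M_B, with twirling maps 𝒢_A, 𝒢_B, 𝒢_{AB} the respective group averages. Then (𝒢_A ⊗ id) ∘ 𝒢_{AB} = 𝒢_A ⊗ 𝒢_B. -/
open TensorProduct

/-- Local twirling on one factor after global (collective) twirling equals the product
of the local twirling maps: (𝒢_A ⊗ id) ∘ 𝒢_{AB} = 𝒢_A ⊗ 𝒢_B. -/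
theorem local_after_global_twirl {G : Type*} [Group G] [Fintype G]
    {MA MB : Type*} [AddCommGroup MA] [Module ℝ MA] [AddCommGroup MB] [Module ℝ MB]
    [FiniteDimensional ℝ MA] [FiniteDimensional ℝ MB]
    (VA : G →* (MA →ₗ[ℝ] MA)) (VB : G →* (MB →ₗ[ℝ] MB)) :
    (TensorProduct.map ((Fintype.card G : ℝ)⁻¹ • ∑ g : G, VA g) (LinearMap.id)) ∘ₗ
        ((Fintype.card G : ℝ)⁻¹ • ∑ g : G, TensorProduct.map (VA g) (VB g))
      = TensorProduct.map ((Fintype.card G : ℝ)⁻¹ • ∑ g : G, VA g)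
          ((Fintype.card G : ℝ)⁻¹ • ∑ g : G, VB g) := by
  have key : ∀ h : G, (((Fintype.card G : ℝ)⁻¹ • ∑ g : G, VA g) ∘ₗ VA h)
      = ((Fintype.card G : ℝ)⁻¹ • ∑ g : G, VA g) := by
    intro h
    rw [LinearMap.smul_comp, ← Module.End.mul_eq_comp, Finset.sum_mul]
    congr 1
    refine Fintype.sum_equiv (Equiv.mulRight h) _ _ (fun g => ?_)
    simp [← map_mul]
  apply TensorProduct.ext'
  intro x y
  simp only [LinearMap.comp_apply, LinearMap.smul_apply, LinearMap.sum_apply,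
    TensorProduct.map_tmul, LinearMap.id_coe, id_eq, map_smul, map_sum]
  have key' : ∀ h : G, ((Fintype.card G : ℝ)⁻¹ • ∑ d : G, (VA d) ((VA h) x))
      = (Fintype.card G : ℝ)⁻¹ • ∑ d : G, (VA d) x := by
    intro h
    have := congrArg (fun f : MA →ₗ[ℝ] MA => f x) (key h)
    simpa using this
  simp only [key']
  rw [TensorProduct.smul_tmul, TensorProduct.tmul_smul, ← TensorProduct.tmul_sum,
    TensorProduct.smul_tmul, TensorProduct.tmul_smul]
end

section
/- The dimension of the real vector space of Hermitian operators on ℂ² ⊗ ℂ² that commute with e^{-iφ(N⊗I + I⊗N)} for all φ ∈ ℝ (with N = |1⟩⟨1|) equals 1² + 2² + 1² = 6, which is strictly greater than the product 2 × 2 = 4 of the dimensions of the spaces of invariant Hermitian operators on each ℂ² factor. -/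
open Matrix Kronecker

/-- The single-mode phase shift e^{-iφN}, N = |1⟩⟨1|, truncated to occupancy {0,1}. -/
noncomputable def phaseShift (φ : ℝ) : Matrix (Fin 2) (Fin 2) ℂ :=
  Matrix.diagonal ![1, Complex.exp (-(φ : ℂ) * Complex.I)]

/-- The collective phase shift e^{-iφ(N⊗I + I⊗N)} on two modes. -/
noncomputable def phaseShift2 (φ : ℝ) : Matrix (Fin 2 × Fin 2) (Fin 2 × Fin 2) ℂ :=
  phaseShift φ ⊗ₖ phaseShift φ

/-- The real vector space of Hermitian operators on one truncated mode commuting with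
every phase shift. -/
noncomputable def invOne : Submodule ℝ (Matrix (Fin 2) (Fin 2) ℂ) where
  carrier := {O | O.IsHermitian ∧ ∀ φ : ℝ, O * phaseShift φ = phaseShift φ * O}
  add_mem' := by
    rintro a b ⟨ha1, ha2⟩ ⟨hb1, hb2⟩
    exact ⟨ha1.add hb1, fun φ => by rw [Matrix.add_mul, Matrix.mul_add, ha2 φ, hb2 φ]⟩
  zero_mem' := ⟨Matrix.isHermitian_zero, fun φ => by simp⟩
  smul_mem' := by
    rintro c a ⟨ha1, ha2⟩
    refine ⟨?_, fun φ => by rw [Matrix.smul_mul, Matrix.mul_smul, ha2 φ]⟩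
    simp [Matrix.IsHermitian, Matrix.conjTranspose_smul, ha1.eq]

/-- The real vector space of Hermitian operators on two truncated modes commuting with
every collective phase shift. -/
noncomputable def invTwo : Submodule ℝ (Matrix (Fin 2 × Fin 2) (Fin 2 × Fin 2) ℂ) where
  carrier := {O | O.IsHermitian ∧ ∀ φ : ℝ, O * phaseShift2 φ = phaseShift2 φ * O}
  add_mem' := by
    rintro a b ⟨ha1, ha2⟩ ⟨hb1, hb2⟩
    exact ⟨ha1.add hb1, fun φ => by rw [Matrix.add_mul, Matrix.mul_add, ha2 φ, hb2 φ]⟩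
  zero_mem' := ⟨Matrix.isHermitian_zero, fun φ => by simp⟩
  smul_mem' := by
    rintro c a ⟨ha1, ha2⟩
    refine ⟨?_, fun φ => by rw [Matrix.smul_mul, Matrix.mul_smul, ha2 φ]⟩
    simp [Matrix.IsHermitian, Matrix.conjTranspose_smul, ha1.eq]


lemma hexp_half : Complex.exp (-((Real.pi/2 : ℝ) : ℂ) * Complex.I) = -Complex.I := by
  rw [Complex.exp_mul_I]
  simp [Complex.cos_neg, Complex.sin_neg, ← Complex.ofReal_cos, ← Complex.ofReal_sin]

@[simp] lemma cons_val_five {α : Type*} (a b c d e f : α) :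
    (![a, b, c, d, e, f] : Fin 6 → α) 5 = f := rfl

lemma cancel_right {a c : ℂ} (h : a * c = 0) (hc : c ≠ 0) : a = 0 :=
  (mul_eq_zero.mp h).resolve_right hc

/-- diagonal form of phaseShift2 -/
lemma ps2_diag (φ : ℝ) : phaseShift2 φ =
    Matrix.diagonal (fun p : Fin 2 × Fin 2 =>
      (![1, Complex.exp (-(φ : ℂ) * Complex.I)] p.1) *
      (![1, Complex.exp (-(φ : ℂ) * Complex.I)] p.2)) := by
  unfold phaseShift2 phaseShift
  rw [Matrix.diagonal_kronecker_diagonal]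

def Dhalf : Fin 2 × Fin 2 → ℂ := fun p => (![1, -Complex.I] p.1) * (![1, -Complex.I] p.2)

lemma ps2_half : phaseShift2 (Real.pi/2) = Matrix.diagonal Dhalf := by
  rw [ps2_diag]
  funext p
  rw [show (-(((Real.pi/2 : ℝ)) : ℂ) * Complex.I) = (-((Real.pi/2 : ℝ) : ℂ) * Complex.I) by push_cast; ring, hexp_half]
  rfl

lemma ps1_half : phaseShift (Real.pi/2) = Matrix.diagonal ![1, -Complex.I] := by
  unfold phaseShift
  rw [show (-(((Real.pi/2 : ℝ)) : ℂ) * Complex.I) = (-((Real.pi/2 : ℝ) : ℂ) * Complex.I) by push_cast; ring, hexp_half]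

noncomputable def gOne : invOne →ₗ[ℝ] (Fin 2 → ℝ) where
  toFun O := fun i => (((O : Matrix (Fin 2) (Fin 2) ℂ)) i i).re
  map_add' a b := by funext i; simp
  map_smul' c a := by funext i; simp [Complex.real_smul]

lemma gOne_bij : Function.Bijective gOne := by
  constructor
  · rw [injective_iff_map_eq_zero]
    rintro ⟨O, hH, hC⟩ h0
    have h0' : ∀ i : Fin 2, (O i i).re = 0 := fun i => congrFun h0 i
    have hd : ∀ i : Fin 2, O i i = 0 := by
      intro i
      have h1 : (starRingEnd ℂ) (O i i) = O i i := by
        have := congrFun (congrFun hH i) i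
        simpa [Matrix.conjTranspose_apply] using this
      have h2 := Complex.conj_eq_iff_im.mp h1
      exact Complex.ext (h0' i) h2
    have hc := hC (Real.pi/2)
    rw [ps1_half] at hc
    have hc' : ∀ i j : Fin 2, O i j * (![1, -Complex.I] j) = (![1, -Complex.I] i) * O i j := by
      intro i j
      have := congrFun (congrFun hc i) j
      simpa [Matrix.mul_diagonal, Matrix.diagonal_mul] using this
    have h01 : O 0 1 = 0 := by
      have h := hc' 0 1
      simp at h
      have h2 : O 0 1 * (-Complex.I - 1) = 0 := by linear_combination h
      exact cancel_right h2 (by simp [Complex.ext_iff])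
    have h10 : O 1 0 = 0 := by
      have h := hc' 1 0
      simp at h
      have h2 : O 1 0 * (1 + Complex.I) = 0 := by linear_combination h
      exact cancel_right h2 (by simp [Complex.ext_iff])
    apply Subtype.ext
    show O = 0
    ext i j
    fin_cases i <;> fin_cases j <;>
      simp [hd 0, hd 1, h01, h10]
  · intro v
    have hmem : Matrix.diagonal (fun i => ((v i : ℝ) : ℂ)) ∈ invOne := by
      constructor
      · unfold Matrix.IsHermitian
        have hst : (star fun i => ((v i : ℝ) : ℂ)) = fun i => ((v i : ℝ) : ℂ) := by
          funext i; simp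
        rw [Matrix.diagonal_conjTranspose, hst]
      · intro φ
        unfold phaseShift
        rw [Matrix.diagonal_mul_diagonal, Matrix.diagonal_mul_diagonal,
          show (fun i => ((v i : ℝ) : ℂ) * ![1, Complex.exp (-(φ : ℂ) * Complex.I)] i)
              = (fun i => ![1, Complex.exp (-(φ : ℂ) * Complex.I)] i * ((v i : ℝ) : ℂ)) from
            funext fun i => mul_comm _ _]
    refine ⟨⟨_, hmem⟩, ?_⟩
    funext i
    simp [gOne]

noncomputable def gTwo : invTwo →ₗ[ℝ] (Fin 6 → ℝ) where
  toFun O :=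
    ![(((O : Matrix (Fin 2 × Fin 2) (Fin 2 × Fin 2) ℂ)) (0,0) (0,0)).re,
      (((O : Matrix (Fin 2 × Fin 2) (Fin 2 × Fin 2) ℂ)) (0,1) (0,1)).re,
      (((O : Matrix (Fin 2 × Fin 2) (Fin 2 × Fin 2) ℂ)) (1,0) (1,0)).re,
      (((O : Matrix (Fin 2 × Fin 2) (Fin 2 × Fin 2) ℂ)) (1,1) (1,1)).re,
      (((O : Matrix (Fin 2 × Fin 2) (Fin 2 × Fin 2) ℂ)) (0,1) (1,0)).re,
      (((O : Matrix (Fin 2 × Fin 2) (Fin 2 × Fin 2) ℂ)) (0,1) (1,0)).im]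
  map_add' a b := by
    funext i
    fin_cases i <;> simp
  map_smul' c a := by
    funext i
    fin_cases i <;> simp [Complex.real_smul]

lemma gTwo_bij : Function.Bijective gTwo := by
  constructor
  · rw [injective_iff_map_eq_zero]
    rintro ⟨O, hH, hC⟩ h0
    have hH' : ∀ p q, (starRingEnd ℂ) (O q p) = O p q := by
      intro p q
      have := congrFun (congrFun hH p) q
      simpa [Matrix.conjTranspose_apply] using this
    have e0 := congrFun h0 0
    have e1 := congrFun h0 1
    have e2 := congrFun h0 2
    have e3 := congrFun h0 3
    have e4 := congrFun h0 4
    have e5 := congrFun h0 5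
    simp [gTwo] at e0 e1 e2 e3 e4 e5
    have hc := hC (Real.pi/2)
    rw [ps2_half] at hc
    have key : ∀ p q, Dhalf p ≠ Dhalf q → O p q = 0 := by
      intro p q hne
      have h := congrFun (congrFun hc p) q
      simp only [Matrix.mul_diagonal, Matrix.diagonal_mul] at h
      have h2 : O p q * (Dhalf q - Dhalf p) = 0 := by linear_combination h
      exact cancel_right h2 (sub_ne_zero.mpr (Ne.symm hne))
    have hdiag : ∀ p, (O p p).re = 0 → O p p = 0 := by
      intro p hre
      have h1 := hH' p p
      exact Complex.ext hre (Complex.conj_eq_iff_im.mp h1)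
    have hd00 := hdiag (0,0) e0
    have hd01 := hdiag (0,1) e1
    have hd10 := hdiag (1,0) e2
    have hd11 := hdiag (1,1) e3
    have hmid : O (0,1) (1,0) = 0 := Complex.ext e4 e5
    have hmid' : O (1,0) (0,1) = 0 := by
      rw [← hH' (1,0) (0,1), hmid]
      simp
    apply Subtype.ext
    show O = 0
    ext p q
    obtain ⟨i, j⟩ := p
    obtain ⟨k, l⟩ := q
    simp only [Matrix.zero_apply]
    fin_cases i <;> fin_cases j <;> fin_cases k <;> fin_cases l <;>
      first
      | exact hd00 | exact hd01 | exact hd10 | exact hd11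
      | exact hmid | exact hmid'
      | exact key _ _ (by norm_num [Dhalf, Complex.ext_iff])
  · intro v
    set z : ℂ := (v 4 : ℂ) + (v 5 : ℂ) * Complex.I with hz
    set M : Matrix (Fin 2 × Fin 2) (Fin 2 × Fin 2) ℂ :=
      Matrix.diagonal (fun p => ((![![v 0, v 1], ![v 2, v 3]] p.1 p.2 : ℝ) : ℂ))
        + Matrix.single ((0 : Fin 2), (1 : Fin 2)) ((1 : Fin 2), (0 : Fin 2)) z
        + Matrix.single ((1 : Fin 2), (0 : Fin 2)) ((0 : Fin 2), (1 : Fin 2)) ((starRingEnd ℂ) z) with hM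
    have hmem : M ∈ invTwo := by
      constructor
      · show Mᴴ = M
        ext p q
        obtain ⟨i, j⟩ := p
        obtain ⟨k, l⟩ := q
        fin_cases i <;> fin_cases j <;> fin_cases k <;> fin_cases l <;>
          simp [hM, Matrix.conjTranspose_apply, Matrix.add_apply, Matrix.diagonal_apply,
            Matrix.single, Prod.ext_iff]
      · intro φ
        rw [ps2_diag]
        ext p q
        obtain ⟨i, j⟩ := p
        obtain ⟨k, l⟩ := q
        fin_cases i <;> fin_cases j <;> fin_cases k <;> fin_cases l <;>
          simp [hM, Matrix.mul_diagonal, Matrix.diagonal_mul, Matrix.add_apply,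
            Matrix.diagonal_apply, Matrix.single, Prod.ext_iff] <;> ring
    refine ⟨⟨M, hmem⟩, ?_⟩
    funext i
    fin_cases i <;>
      simp [gTwo, hM, hz, Matrix.add_apply, Matrix.diagonal_apply, Matrix.single,
        Prod.ext_iff]

/-- Parameter counting: the space of invariant Hermitian operators on two modes has
dimension 6 = 1² + 2² + 1², strictly exceeding the product 2 × 2 of the local
invariant dimensions. -/
theorem phase_twirled_dimension_gap :
    Module.finrank ℝ invTwo = 6 ∧ Module.finrank ℝ invOne = 2 ∧
      Module.finrank ℝ invOne * Module.finrank ℝ invOne < Module.finrank ℝ invTwo := by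
  have h1 : Module.finrank ℝ invOne = 2 := by
    rw [LinearEquiv.finrank_eq (LinearEquiv.ofBijective gOne gOne_bij)]
    simp [Module.finrank_fin_fun]
  have h2 : Module.finrank ℝ invTwo = 6 := by
    rw [LinearEquiv.finrank_eq (LinearEquiv.ofBijective gTwo gTwo_bij)]
    simp [Module.finrank_fin_fun]
  exact ⟨h2, h1, by rw [h1, h2]; norm_num⟩
end
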